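/- arXiv:2510.20555 — 9 statements merged into one kernel-verified Lean document; each statement's English description precedes it below -/
import Mathlib

section
/- Let $h_1,\ldots,h_N:\mathcal{D}\to\mathbb{R}_{>0}$ be $u$-balanced (i.e., $h_i(x)/h_j(x)\le u$ for all $i,j,x$), let $\varepsilon\in(0,1]$, set $\delta=\varepsilon/(4uN)$, and fix $i\in[N]$. Let $\mu\in[0,1]^N$ with $\mu_i=1$, and define $\lambda_j=\max(\mu_j,\delta)$ for all $j$. If $x(\lambda)$ minimizes $g_\lambda=\sum_j\lambda_j h_j$ over $\mathcal{D}$ and $x(\mu)$ minimizes $g_\mu=\sum_j\mu_j h_j$ over $\mathcal{D}$, then $g_\lambda(x(\lambda))\le(1+\varepsilon/4)\,g_\mu(x(\mu))$, and moreover $g_\mu(x(\lambda))\le g_\lambda(x(\lambda))$. -/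
/-!
Since `λ ≥ μ` coordinatewise, `g_μ ≤ g_λ` pointwise. For the other bound, fix any point `y`:
as `0 ≤ λ_j - μ_j ≤ δ`, we get `g_λ(y) ≤ g_μ(y) + δ ∑_j h_j(y)`, and balance gives
`∑_j h_j(y) ≤ N u h_i(y) ≤ N u g_μ(y)` because `μ_i = 1`. As `δ N u = ε/4`, minimality of `x(λ)`
gives `g_λ(x(λ)) ≤ (1 + ε/4) g_μ(y)`, in particular for `y = x(μ)`.
-/

open Finset

section

variable {ι : Type*} [Fintype ι]

lemma sum_mul_le_sum_mul_add_mul_sum {μ lam a : ι → ℝ} {δ : ℝ}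
    (hdiff : ∀ j, lam j - μ j ≤ δ) (ha : ∀ j, 0 ≤ a j) :
    ∑ j, lam j * a j ≤ ∑ j, μ j * a j + δ * ∑ j, a j := by
  rw [mul_sum, ← sum_add_distrib]
  exact sum_le_sum fun j _ => by nlinarith [hdiff j, ha j]

lemma le_sum_mul_of_eq_one {μ a : ι → ℝ} (hμ : ∀ j, 0 ≤ μ j) (ha : ∀ j, 0 ≤ a j) {i : ι}
    (hμi : μ i = 1) : a i ≤ ∑ j, μ j * a j := by
  simpa [hμi] using single_le_sum (fun j _ => mul_nonneg (hμ j) (ha j)) (mem_univ i)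

lemma sum_le_card_mul_of_div_le {a : ι → ℝ} {u : ℝ} {i : ι} (hai : 0 < a i)
    (hbal : ∀ j, a j / a i ≤ u) : ∑ j, a j ≤ Fintype.card ι * (u * a i) := by
  calc ∑ j, a j ≤ ∑ _j : ι, u * a i := sum_le_sum fun j _ => (div_le_iff₀ hai).1 (hbal j)
    _ = Fintype.card ι * (u * a i) := by simp

end

theorem stmt2_general {D : Type*} {N : ℕ}
    (h : Fin N → D → ℝ) (hpos : ∀ i x, 0 < h i x)
    (u : ℝ) (hu : 1 ≤ u)
    (hbal : ∀ x : D, ∀ i j : Fin N, h i x / h j x ≤ u)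
    (ε : ℝ) (hε0 : 0 < ε)
    (i : Fin N) (μ : Fin N → ℝ)
    (hμ0 : ∀ j, 0 ≤ μ j) (hμi : μ i = 1)
    (lam : Fin N → ℝ) (hlam : ∀ j, lam j = max (μ j) (ε / (4 * u * N)))
    (xl xm : D)
    (hxl : ∀ y : D, ∑ j, lam j * h j xl ≤ ∑ j, lam j * h j y) :
    (∑ j, lam j * h j xl ≤ (1 + ε / 4) * ∑ j, μ j * h j xm) ∧
    (∑ j, μ j * h j xl ≤ ∑ j, lam j * h j xl) := by
  have hu0 : 0 < u := by linarith
  have hN : (0 : ℝ) < N := by exact_mod_cast i.pos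
  set δ := ε / (4 * u * N) with hδ_def
  have hδ : 0 ≤ δ := by positivity
  have hμ_le : ∀ j, μ j ≤ lam j := fun j => hlam j ▸ le_max_left _ _
  have hdiff : ∀ j, lam j - μ j ≤ δ := fun j => by
    rw [hlam j, ← max_sub_sub_right, sub_self]
    exact max_le hδ (by linarith [hμ0 j])
  have hsum : ∑ j, h j xm ≤ N * (u * ∑ j, μ j * h j xm) :=
    calc ∑ j, h j xm ≤ N * (u * h i xm) := by
          simpa using sum_le_card_mul_of_div_le (a := fun j => h j xm) (hpos i xm) (hbal xm · i)
      _ ≤ N * (u * ∑ j, μ j * h j xm) := by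
          gcongr
          exact le_sum_mul_of_eq_one hμ0 (fun j => (hpos j xm).le) hμi
  refine ⟨?_, sum_le_sum fun j _ => mul_le_mul_of_nonneg_right (hμ_le j) (hpos j xl).le⟩
  calc ∑ j, lam j * h j xl ≤ ∑ j, lam j * h j xm := hxl xm
    _ ≤ ∑ j, μ j * h j xm + δ * ∑ j, h j xm :=
      sum_mul_le_sum_mul_add_mul_sum hdiff fun j => (hpos j xm).le
    _ ≤ ∑ j, μ j * h j xm + δ * (N * (u * ∑ j, μ j * h j xm)) := by gcongr
    _ = (1 + ε / 4) * ∑ j, μ j * h j xm := by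
      rw [hδ_def]; field_simp

/-- with `δ = ε/(4uN)` and `λ_j = max(μ_j, δ)`, the optimal values of
`g_λ` and `g_μ` are within factor `1 + ε/4`, and `g_μ(x(λ)) ≤ g_λ(x(λ))`. -/
theorem stmt2 {D : Type*} [Nonempty D] {N : ℕ} (hN : 1 ≤ N)
    (h : Fin N → D → ℝ) (hpos : ∀ i x, 0 < h i x)
    (u : ℝ) (hu : 1 ≤ u)
    (hbal : ∀ x : D, ∀ i j : Fin N, h i x / h j x ≤ u)
    (ε : ℝ) (hε0 : 0 < ε) (hε1 : ε ≤ 1)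
    (i : Fin N) (μ : Fin N → ℝ)
    (hμ0 : ∀ j, 0 ≤ μ j) (hμ1 : ∀ j, μ j ≤ 1) (hμi : μ i = 1)
    (lam : Fin N → ℝ) (hlam : ∀ j, lam j = max (μ j) (ε / (4 * u * N)))
    (xl xm : D)
    (hxl : ∀ y : D, ∑ j, lam j * h j xl ≤ ∑ j, lam j * h j y)
    (hxm : ∀ y : D, ∑ j, μ j * h j xm ≤ ∑ j, μ j * h j y) :
    (∑ j, lam j * h j xl ≤ (1 + ε / 4) * ∑ j, μ j * h j xm) ∧
    (∑ j, μ j * h j xl ≤ ∑ j, lam j * h j xl) :=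
  stmt2_general h hpos u hu hbal ε hε0 i μ hμ0 hμi lam hlam xl xm hxl
end

section
/- For every $N\ge 1$ there exist a finite set $\mathcal{D}\subseteq\mathbb{R}_{\ge 0}^N$ and linear base functions $h_i(x)=x_i$ such that any $2$-approximate portfolio for the class of conic combinations $\{x\mapsto\sum_{i\in S}x_i : \emptyset\neq S\subseteq[N]\}$ must have size at least $2^N-1$. Concretely, with $a=3$, $b=2Na^N$, and for each nonempty $S\subseteq[N]$ the point $x(S)$ defined by $x(S)_i=a^{|S|}$ if $i\in S$ and $x(S)_i=b$ otherwise, the set $\mathcal{D}=\{x(S):\emptyset\neq S\subseteq[N]\}$ satisfies: for all nonempty $S\neq T$, $\sum_{i\in S}x(T)_i>2\sum_{i\in S}x(S)_i$. -/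
/-!
Write `s = #S`, `t = #T` and `n` for the dimension. Then `∑_{i∈S} x(S)_i = s·a^s`, while
`∑_{i∈S} x(T)_i = #(S ∩ T)·a^t + #(S \ T)·b`. If `S ⊂ T`, then `t > s` and the right side is
`s·a^t ≥ a·s·a^s > 2·s·a^s`. Otherwise some coordinate of `S` contributes `b ≥ 2·n·a^n`, which
dominates `2·s·a^s` since `k ↦ k·a^k` is increasing; the inequality is strict because either
`S ∩ T` contributes a further positive term, or `S` and `T` are disjoint and then `s < n`.
-/

open Finset

variable {ι : Type*} [DecidableEq ι]

def portfolioPoint (a b : ℝ) (S : Finset ι) (i : ι) : ℝ :=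
  if i ∈ S then a ^ #S else b

lemma sum_portfolioPoint_self (a b : ℝ) (S : Finset ι) :
    ∑ i ∈ S, portfolioPoint a b S i = #S * a ^ #S := by
  have h_in : ∀ i ∈ S, portfolioPoint a b S i = a ^ #S := fun i hi => if_pos hi
  rw [sum_congr rfl h_in, sum_const, nsmul_eq_mul]

lemma sum_portfolioPoint (a b : ℝ) (S T : Finset ι) :
    ∑ i ∈ S, portfolioPoint a b T i = #(S ∩ T) * a ^ #T + #(S \ T) * b := by
  have h_in : ∀ i ∈ S ∩ T, portfolioPoint a b T i = a ^ #T :=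
    fun i hi => if_pos (mem_inter.1 hi).2
  have h_out : ∀ i ∈ S \ T, portfolioPoint a b T i = b := fun i hi => if_neg (mem_sdiff.1 hi).2
  rw [← sum_inter_add_sum_sdiff S T, sum_congr rfl h_in, sum_congr rfl h_out, sum_const,
    sum_const, nsmul_eq_mul, nsmul_eq_mul]

lemma strictMono_natCast_mul_pow {a : ℝ} (ha : 1 ≤ a) :
    StrictMono fun k : ℕ => (k : ℝ) * a ^ k := by
  refine strictMono_nat_of_lt_succ fun k => ?_
  have hpow : a ^ k ≤ a ^ (k + 1) := pow_le_pow_right₀ ha k.le_succ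
  have hpos : 0 < a ^ (k + 1) := by positivity
  push_cast
  nlinarith

lemma two_mul_sum_portfolioPoint_lt_of_ssubset {a : ℝ} (ha : 2 < a) (b : ℝ)
    {S T : Finset ι} (hS : S.Nonempty) (hST : S ⊂ T) :
    2 * ∑ i ∈ S, portfolioPoint a b S i < ∑ i ∈ S, portfolioPoint a b T i := by
  have hs : (0 : ℝ) < #S := by exact_mod_cast hS.card_pos
  have hpow : a * a ^ #S ≤ a ^ #T := by
    rw [← pow_succ']
    exact pow_le_pow_right₀ (by linarith) (card_lt_card hST)
  rw [sum_portfolioPoint_self, sum_portfolioPoint, inter_eq_left.2 hST.subset,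
    sdiff_eq_empty_iff_subset.2 hST.subset, card_empty, Nat.cast_zero, zero_mul, add_zero]
  calc 2 * (#S * a ^ #S) < a * (#S * a ^ #S) := by gcongr
    _ = #S * (a * a ^ #S) := by ring
    _ ≤ #S * a ^ #T := by gcongr

lemma two_mul_sum_portfolioPoint_lt_of_not_subset [Fintype ι] {a b : ℝ} (ha : 1 ≤ a)
    (hb : 2 * Fintype.card ι * a ^ Fintype.card ι ≤ b) {S T : Finset ι}
    (hT : T.Nonempty) (hST : ¬S ⊆ T) :
    2 * ∑ i ∈ S, portfolioPoint a b S i < ∑ i ∈ S, portfolioPoint a b T i := by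
  have hdiff : (1 : ℝ) ≤ #(S \ T) := by exact_mod_cast (sdiff_nonempty.2 hST).card_pos
  have hb_le : b ≤ #(S \ T) * b := le_mul_of_one_le_left (le_trans (by positivity) hb) hdiff
  have hS_le : #S * a ^ #S ≤ Fintype.card ι * a ^ Fintype.card ι :=
    (strictMono_natCast_mul_pow ha).monotone (card_le_univ S)
  rw [sum_portfolioPoint_self, sum_portfolioPoint]
  rcases (S ∩ T).eq_empty_or_nonempty with hdisj | hmeet
  · have hS_lt : #S < Fintype.card ι := by
      have := card_union_of_disjoint (disjoint_iff_inter_eq_empty.2 hdisj)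
      have := card_le_univ (S ∪ T)
      have := hT.card_pos
      omega
    have := strictMono_natCast_mul_pow ha hS_lt
    rw [hdisj, card_empty, Nat.cast_zero, zero_mul, zero_add]
    linarith
  · have h_meet_term : (0 : ℝ) < #(S ∩ T) * a ^ #T := by
      have : (0 : ℝ) < #(S ∩ T) := by exact_mod_cast hmeet.card_pos
      positivity
    linarith

theorem stmt3_general (N : ℕ) :
    let a : ℝ := 3
    let b : ℝ := 2 * N * a ^ N
    let x : Finset (Fin N) → Fin N → ℝ := fun S i => if i ∈ S then a ^ S.card else b
    ∀ S T : Finset (Fin N), S.Nonempty → T.Nonempty → S ≠ T →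
      2 * ∑ i ∈ S, x S i < ∑ i ∈ S, x T i := by
  intro a b x S T hS hT hST
  by_cases hsub : S ⊆ T
  · exact two_mul_sum_portfolioPoint_lt_of_ssubset (by norm_num) b hS (hsub.ssubset_of_ne hST)
  · exact two_mul_sum_portfolioPoint_lt_of_not_subset (by norm_num) (by simp [b, a]) hT hsub

/-- lower bound construction for portfolios of conic combinations.
With `a = 3`, `b = 2·N·a^N` and `x(S)_i = a^|S|` for `i ∈ S`, `b` otherwise,
for all nonempty `S ≠ T` we have `∑_{i∈S} x(T)_i > 2·∑_{i∈S} x(S)_i`. -/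
theorem stmt3 (N : ℕ) (hN : 1 ≤ N) :
    let a : ℝ := 3
    let b : ℝ := 2 * N * a ^ N
    let x : Finset (Fin N) → Fin N → ℝ := fun S i => if i ∈ S then a ^ S.card else b
    ∀ S T : Finset (Fin N), S.Nonempty → T.Nonempty → S ≠ T →
      2 * ∑ i ∈ S, x S i < ∑ i ∈ S, x T i :=
  stmt3_general N
end

section
/- Let $\mathbf{C}=\{g_\lambda:\lambda\in[a,b]\}$ be a family of functions $g_\lambda:\mathcal{D}\to\mathbb{R}_{>0}$ on a finite set $\mathcal{D}$ such that $g_a(x)=\sum_{i=1}^N h_i(x)$, $g_b(x)=\max_{i\in[N]}h_i(x)$, and $g_\lambda(x)\ge g_\mu(x)$ whenever $\lambda\le\mu$, for positive functions $h_1,\ldots,h_N$. Then for every $\varepsilon\in(0,1]$ there exists a set $P\subseteq\mathcal{D}$ with $|P|\le 1+\log_{1+\varepsilon}(N)$ such that for every $\lambda\in[a,b]$ there is $x\in P$ with $g_\lambda(x)\le(1+\varepsilon)\min_{y\in\mathcal{D}}g_\lambda(y)$. -/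
/-! The optimal value `opt λ = min_y g_λ y` is antitone in `λ` and, since `∑ hᵢ ≤ N · max hᵢ`,
drops by a factor of at most `N` between `a` and `b`. Cut the range of `opt` into
`⌊log_{1+ε} N⌋ + 1` bands of ratio `1 + ε`. By pigeonhole over the finite `D`, each band has a
point `x` minimizing `g_μ` for parameters `μ` arbitrarily low in the band (the band need not have
a least element); by monotonicity `g_λ x` then stays below the band's upper end, hence within a
factor `1 + ε` of `opt λ`, for every `λ` of the band. -/

open Finset Real

theorem exists_forall_exists_le_apply_eq {α ι : Type*} [LinearOrder α] [Finite ι] [Nonempty ι]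
    (f : α → ι) (S : Set α) : ∃ i, ∀ ν ∈ S, ∃ μ ∈ S, μ ≤ ν ∧ f μ = i := by
  by_contra! hcon
  choose ν hνS hν using hcon
  obtain ⟨i, hi⟩ := Finite.exists_min ν
  exact hν (f (ν i)) (ν i) (hνS i) (hi _) rfl

theorem exists_forall_le_of_antitoneOn {α β D : Type*} [LinearOrder α] [LinearOrder β]
    [Finite D] [Nonempty D] (g : α → D → β) {S : Set α} (hg : ∀ x, AntitoneOn (g · x) S)
    {M : β} (hM : ∀ lam ∈ S, ∃ y, g lam y ≤ M) : ∃ x, ∀ lam ∈ S, g lam x ≤ M := by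
  choose Y hY using fun lam => Finite.exists_min (g lam)
  obtain ⟨x, hx⟩ := exists_forall_exists_le_apply_eq Y S
  refine ⟨x, fun lam hlam => ?_⟩
  obtain ⟨mu, hmu, hmulam, rfl⟩ := hx lam hlam
  obtain ⟨y, hy⟩ := hM mu hmu
  calc g lam (Y mu) ≤ g mu (Y mu) := hg _ hmu hlam hmulam
    _ ≤ g mu y := hY mu y
    _ ≤ M := hy

theorem exists_le_and_lt_succ {α : Type*} [LinearOrder α] (u : ℕ → α) {t : α} (K : ℕ)
    (h0 : t ≤ u 0) (hK : u (K + 1) < t) : ∃ k ≤ K, u (k + 1) < t ∧ t ≤ u k := by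
  induction K with
  | zero => exact ⟨0, le_rfl, hK, h0⟩
  | succ K ih =>
    rcases lt_or_ge (u (K + 1)) t with hlt | hge
    · obtain ⟨k, hk, hkt⟩ := ih hlt
      exact ⟨k, hk.trans K.le_succ, hkt⟩
    · exact ⟨K + 1, le_rfl, hK, hge⟩

/-- One point for each band `(t / r ^ (k + 1), t / r ^ k]` of optimal values. -/
theorem exists_approx_portfolio_card_le_succ {α D : Type*} [LinearOrder α] [Finite D] [Nonempty D]
    (g : α → D → ℝ) {T : Set α} (hg : ∀ x, AntitoneOn (g · x) T) {r t : ℝ} (hr : 0 < r) (K : ℕ)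
    (hlow : ∀ lam ∈ T, ∀ y, t / r ^ (K + 1) < g lam y) (hup : ∀ lam ∈ T, ∃ y, g lam y ≤ t) :
    ∃ P : Finset D, #P ≤ K + 1 ∧ ∀ lam ∈ T, ∃ x ∈ P, ∀ y, g lam x ≤ r * g lam y := by
  classical
  set u : ℕ → ℝ := fun k => t / r ^ k
  have hu : ∀ k, u k = r * u (k + 1) := fun k => by
    simp only [u, pow_succ]; field_simp
  let band k := {lam ∈ T | (∀ y, u (k + 1) < g lam y) ∧ ∃ y, g lam y ≤ u k}
  choose X hX using fun k => exists_forall_le_of_antitoneOn g (S := band k)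
    (fun x => (hg x).mono fun _ h => h.1) (fun lam h => h.2.2)
  refine ⟨(range (K + 1)).image X, card_image_le.trans (card_range _).le, fun lam hlam => ?_⟩
  obtain ⟨y₀, hy₀⟩ := Finite.exists_min (g lam)
  obtain ⟨y₁, hy₁⟩ := hup lam hlam
  have hu₀ : g lam y₀ ≤ u 0 := by simpa [u] using (hy₀ y₁).trans hy₁
  obtain ⟨k, hk, hlt, hle⟩ := exists_le_and_lt_succ u K hu₀ (hlow lam hlam y₀)
  refine ⟨X k, mem_image_of_mem X (mem_range.2 (Nat.lt_succ_of_le hk)), fun y => ?_⟩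
  calc g lam (X k) ≤ u k := hX k lam ⟨hlam, fun y => hlt.trans_le (hy₀ y), y₀, hle⟩
    _ = r * u (k + 1) := hu k
    _ ≤ r * g lam y := by gcongr; exact hlt.le.trans (hy₀ y)

theorem lt_pow_floor_logb_add_one {r x : ℝ} (hr : 1 < r) (hx : 0 < x) :
    x < r ^ (⌊logb r x⌋₊ + 1) := by
  have := (logb_lt_iff_lt_rpow hr hx).1 (Nat.lt_floor_add_one (logb r x))
  exact_mod_cast this

theorem sum_le_card_mul_sup' {ι : Type*} [Fintype ι] (hne : (univ : Finset ι).Nonempty)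
    (f : ι → ℝ) : ∑ i, f i ≤ Fintype.card ι * univ.sup' hne f := by
  simpa using sum_le_card_nsmul univ f _ fun i _ => le_sup' f (mem_univ i)

theorem stmt6_general {D : Type*} [Fintype D] [Nonempty D] {N : ℕ} (hN : 1 ≤ N)
    (hne : (Finset.univ : Finset (Fin N)).Nonempty)
    (a b : ℝ) (hab : a ≤ b)
    (h : Fin N → D → ℝ)
    (g : ℝ → D → ℝ)
    (hgpos : ∀ lam ∈ Set.Icc a b, ∀ x : D, 0 < g lam x)
    (hga : ∀ x : D, g a x = ∑ i, h i x)
    (hgb : ∀ x : D, g b x = Finset.univ.sup' hne (fun i => h i x))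
    (hmono : ∀ lam mu : ℝ, a ≤ lam → lam ≤ mu → mu ≤ b → ∀ x : D, g mu x ≤ g lam x)
    (ε : ℝ) (hε0 : 0 < ε) :
    ∃ P : Finset D, (P.card : ℝ) ≤ 1 + Real.logb (1 + ε) N ∧
      ∀ lam ∈ Set.Icc a b, ∃ x ∈ P, ∀ y : D, g lam x ≤ (1 + ε) * g lam y := by
  have hr : 1 < 1 + ε := by linarith
  have hNpos : (0 : ℝ) < N := by exact_mod_cast hN
  set K := ⌊logb (1 + ε) N⌋₊
  obtain ⟨y₀, hy₀⟩ := Finite.exists_min (g a)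
  have hanti : ∀ x, AntitoneOn (g · x) (Set.Icc a b) :=
    fun x lam hlam mu hmu hle => hmono lam mu hlam.1 hle hmu.2 x
  have hsum : ∀ y, g a y₀ ≤ N * g b y := fun y => by
    have := sum_le_card_mul_sup' hne (h · y)
    rw [Fintype.card_fin, ← hga, ← hgb] at this
    exact (hy₀ y).trans this
  have hlow : ∀ lam ∈ Set.Icc a b, ∀ y, g a y₀ / (1 + ε) ^ (K + 1) < g lam y := by
    intro lam hlam y
    calc g a y₀ / (1 + ε) ^ (K + 1) < g a y₀ / N := by
          gcongr
          · exact hgpos a ⟨le_rfl, hab⟩ y₀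
          · exact lt_pow_floor_logb_add_one hr hNpos
      _ ≤ g b y := by rw [div_le_iff₀' hNpos]; exact hsum y
      _ ≤ g lam y := hanti y hlam ⟨hab, le_rfl⟩ hlam.2
  obtain ⟨P, hcard, hP⟩ := exists_approx_portfolio_card_le_succ g hanti (by linarith) K hlow
    fun lam hlam => ⟨y₀, hanti y₀ ⟨le_rfl, hab⟩ hlam hlam.1⟩
  refine ⟨P, ?_, hP⟩
  have hK : (K : ℝ) ≤ logb (1 + ε) N := Nat.floor_le (logb_nonneg hr (by exact_mod_cast hN))
  have : (#P : ℝ) ≤ K + 1 := by exact_mod_cast hcard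
  linarith

/-- a monotonically interpolating family between the `L₁` and `L_∞`
objectives admits a `(1+ε)`-approximate portfolio of size at most `1 + log_{1+ε} N`. -/
theorem stmt6 {D : Type*} [Fintype D] [Nonempty D] {N : ℕ} (hN : 1 ≤ N)
    (hne : (Finset.univ : Finset (Fin N)).Nonempty)
    (a b : ℝ) (hab : a ≤ b)
    (h : Fin N → D → ℝ) (hpos : ∀ i x, 0 < h i x)
    (g : ℝ → D → ℝ)
    (hgpos : ∀ lam ∈ Set.Icc a b, ∀ x : D, 0 < g lam x)
    (hga : ∀ x : D, g a x = ∑ i, h i x)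
    (hgb : ∀ x : D, g b x = Finset.univ.sup' hne (fun i => h i x))
    (hmono : ∀ lam mu : ℝ, a ≤ lam → lam ≤ mu → mu ≤ b → ∀ x : D, g mu x ≤ g lam x)
    (ε : ℝ) (hε0 : 0 < ε) (hε1 : ε ≤ 1) :
    ∃ P : Finset D, (P.card : ℝ) ≤ 1 + Real.logb (1 + ε) N ∧
      ∀ lam ∈ Set.Icc a b, ∃ x ∈ P, ∀ y : D, g lam x ≤ (1 + ε) * g lam y :=
  stmt6_general hN hne a b hab h g hgpos hga hgb hmono ε hε0
end

section
/- Let $G=(C,E)$ be a finite undirected graph with a weight $\Delta_j\ge 0$ on each vertex $j$. Then there exist an independent set $C^*\subseteq C$ and, for each $j\in C$, a path $p_j$ in $G$ from $j$ to some vertex of $C^*$ such that the sum of vertex weights along $p_j$ (including both endpoints) is at most $2\Delta_j$. -/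
private lemma stmt8_aux {C : Type*} (G : SimpleGraph C) (Δ : C → ℝ) :
    ∀ s : Finset C, ∃ S : Finset C, S ⊆ s ∧ (∀ u ∈ S, ∀ v ∈ S, ¬ G.Adj u v) ∧
      ∀ j ∈ s, j ∈ S ∨ ∃ v ∈ S, G.Adj j v ∧ Δ v ≤ Δ j := by
  classical
  intro s
  induction s using Finset.strongInduction with
  | _ s ih =>
    rcases s.eq_empty_or_nonempty with rfl | hne
    · exact ⟨∅, by simp⟩
    · obtain ⟨j₀, hj₀, hmin⟩ := s.exists_min_image Δ hne
      set s' := s.filter (fun v => v ≠ j₀ ∧ ¬ G.Adj j₀ v) with hs'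
      have hss : s' ⊂ s := by
        refine Finset.ssubset_iff_of_subset (Finset.filter_subset _ _) |>.mpr ?_
        exact ⟨j₀, hj₀, by simp [hs']⟩
      obtain ⟨S', hS'sub, hS'ind, hS'dom⟩ := ih s' hss
      refine ⟨insert j₀ S', ?_, ?_, ?_⟩
      · intro x hx
        rcases Finset.mem_insert.mp hx with rfl | hx
        · exact hj₀
        · exact Finset.filter_subset _ _ (hS'sub hx)
      · intro u hu v hv
        rcases Finset.mem_insert.mp hu with hu1 | hu2
        · rcases Finset.mem_insert.mp hv with hv1 | hv2
          · rw [hu1, hv1]; exact G.loopless.irrefl _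
          · rw [hu1]; exact ((Finset.mem_filter.mp (hS'sub hv2)).2).2
        · rcases Finset.mem_insert.mp hv with hv1 | hv2
          · rw [hv1]
            intro h
            exact ((Finset.mem_filter.mp (hS'sub hu2)).2).2 h.symm
          · exact hS'ind u hu2 v hv2
      · intro j hj
        by_cases hjs' : j ∈ s'
        · rcases hS'dom j hjs' with h | ⟨v, hv, hadj, hle⟩
          · exact Or.inl (Finset.mem_insert_of_mem h)
          · exact Or.inr ⟨v, Finset.mem_insert_of_mem hv, hadj, hle⟩
        · simp only [hs', Finset.mem_filter, hj, true_and, not_and_or, not_not] at hjs'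
          rcases hjs' with h | h
          · exact Or.inl (Finset.mem_insert.mpr (Or.inl h))
          · exact Or.inr ⟨j₀, Finset.mem_insert_self _ _, h.symm, hmin j hj⟩

/-- (core clients) in a finite vertex-weighted graph there exist an
independent set `C*` and, for every vertex `j`, a path from `j` to some vertex of `C*`
whose total vertex weight (including both endpoints) is at most `2·Δ j`. -/
theorem stmt8 {C : Type*} [Fintype C] (G : SimpleGraph C)
    (Δ : C → ℝ) (hΔ : ∀ j, 0 ≤ Δ j) :
    ∃ Cstar : Set C,
      (∀ u ∈ Cstar, ∀ v ∈ Cstar, ¬ G.Adj u v) ∧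
      (∀ j : C, ∃ jstar ∈ Cstar, ∃ p : G.Walk j jstar, p.IsPath ∧
        (p.support.map Δ).sum ≤ 2 * Δ j) := by
  classical
  obtain ⟨S, -, hind, hdom⟩ := stmt8_aux G Δ Finset.univ
  refine ⟨↑S, fun u hu v hv => hind u hu v hv, fun j => ?_⟩
  rcases hdom j (Finset.mem_univ j) with hj | ⟨v, hv, hadj, hle⟩
  · refine ⟨j, hj, SimpleGraph.Walk.nil, SimpleGraph.Walk.IsPath.nil, ?_⟩
    simp only [SimpleGraph.Walk.support_nil, List.map_cons, List.map_nil, List.sum_cons,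
      List.sum_nil, add_zero]
    linarith [hΔ j]
  · refine ⟨v, hv, SimpleGraph.Walk.cons hadj SimpleGraph.Walk.nil, ?_, ?_⟩
    · simp [SimpleGraph.Walk.isPath_def, G.ne_of_adj hadj]
    · simp only [SimpleGraph.Walk.support_cons, SimpleGraph.Walk.support_nil, List.map_cons,
        List.map_nil, List.sum_cons, List.sum_nil, add_zero]
      linarith
end

section
/- Let $G=(C,E)$ be a finite undirected graph with vertex weights $\Delta:C\to\mathbb{R}_{\ge 0}$, and let $C^*$ and paths $(p_j)_{j\in C}$ be produced by the CoreClients decomposition, i.e., $C^*$ is independent, each $p_j$ goes from $j$ to some $j^*\in C^*$ with $\Delta(p_j)\le 2\Delta_j$, and the decomposition is constructed greedily by choosing minimum-weight roots. Then for every edge $jj^*\in E$ with $j^*\in C^*$, we have $\Delta_j\ge\frac{1}{2}\Delta_{j^*}$. -/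
/-!
Let `T` be the set of vertices all of whose neighbours weigh at least half as much as they do,
and let `C*` be the independent set chosen greedily inside `T` by increasing weight, so that
every other vertex of `T` has a neighbour in `C*` that is no heavier. The neighbour bound then
holds by construction. A path from `j` is found by descending: from `j ∈ T` one edge reaches
`C*` at cost at most `2 Δ j`, and from `j ∉ T` one steps to a neighbour `j'` with
`Δ j' < Δ j / 2`, whose path of weight at most `2 Δ j' < Δ j` cannot revisit `j`.
-/

namespace SimpleGraph

variable {V : Type*} {G : SimpleGraph V}

theorem exists_isIndepSet_subset_forall_exists_adj_le {α : Type*} [LinearOrder α] (f : V → α)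
    (F : Finset V) :
    ∃ S ⊆ F, G.IsIndepSet S ∧ ∀ t ∈ F, t ∉ S → ∃ s ∈ S, G.Adj t s ∧ f s ≤ f t := by
  classical
  induction F using Finset.strongInduction with
  | H F ih =>
    rcases F.eq_empty_or_nonempty with rfl | hne
    · exact ⟨∅, subset_rfl, by simp, by simp⟩
    obtain ⟨m, hm, hmin⟩ := F.exists_min_image f hne
    obtain ⟨S, hSF, hS, hdom⟩ :=
      ih (F.filter fun v => v ≠ m ∧ ¬G.Adj m v) (Finset.filter_ssubset.mpr ⟨m, hm, by simp⟩)
    have hSm : ∀ v ∈ S, v ≠ m ∧ ¬G.Adj m v := fun v hv => (Finset.mem_filter.mp (hSF hv)).2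
    refine ⟨insert m S, Finset.insert_subset hm (hSF.trans (Finset.filter_subset _ F)), ?_, ?_⟩
    · rw [Finset.coe_insert]
      exact hS.insert fun v hv _ => ⟨(hSm v hv).2, fun h => (hSm v hv).2 h.symm⟩
    · intro t ht htS
      rw [Finset.mem_insert, not_or] at htS
      by_cases hadj : G.Adj m t
      · exact ⟨m, Finset.mem_insert_self m S, hadj.symm, hmin t ht⟩
      · obtain ⟨s, hs, hts, hle⟩ := hdom t (Finset.mem_filter.mpr ⟨ht, htS.1, hadj⟩) htS.2
        exact ⟨s, Finset.mem_insert_of_mem hs, hts, hle⟩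

theorem Walk.le_sum_map_support {Δ : V → ℝ} (hΔ : ∀ v, 0 ≤ Δ v) {u w v : V} (p : G.Walk u w)
    (hv : v ∈ p.support) : Δ v ≤ (p.support.map Δ).sum :=
  List.single_le_sum (by simpa using fun x _ => hΔ x) _ (List.mem_map_of_mem hv)

theorem exists_isPath_sum_map_support_le_two_mul [Finite V] {Δ : V → ℝ} (hΔ : ∀ v, 0 ≤ Δ v)
    {S : Set V}
    (hS : ∀ t ∉ S, (∀ t', G.Adj t t' → Δ t / 2 ≤ Δ t') → ∃ s ∈ S, G.Adj t s ∧ Δ s ≤ Δ t)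
    (j : V) : ∃ s ∈ S, ∃ p : G.Walk j s, p.IsPath ∧ (p.support.map Δ).sum ≤ 2 * Δ j := by
  induction j using
    (Finite.wellFounded_of_trans_of_irrefl fun a b : V => Δ a < Δ b).induction with
  | _ j ih =>
    by_cases hjS : j ∈ S
    · refine ⟨j, hjS, .nil, .nil, ?_⟩
      simp only [Walk.support_nil, List.map_cons, List.map_nil, List.sum_cons, List.sum_nil,
        add_zero]
      linarith [hΔ j]
    by_cases hheavy : ∀ j', G.Adj j j' → Δ j / 2 ≤ Δ j'
    · obtain ⟨s, hs, hadj, hle⟩ := hS j hjS hheavy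
      refine ⟨s, hs, hadj.toWalk, .of_adj hadj, ?_⟩
      simp only [Adj.toWalk, Walk.support_cons, Walk.support_nil, List.map_cons, List.map_nil,
        List.sum_cons, List.sum_nil, add_zero]
      linarith
    push Not at hheavy
    obtain ⟨j', hadj, hlight⟩ := hheavy
    obtain ⟨s, hs, p, hp, hsum⟩ := ih j' (by linarith [hΔ j'])
    have hj : j ∉ p.support := fun h => by linarith [p.le_sum_map_support hΔ h]
    refine ⟨s, hs, .cons hadj p, hp.cons hj, ?_⟩
    simp only [Walk.support_cons, List.map_cons, List.sum_cons]
    linarith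

end SimpleGraph

/-- the CoreClients decomposition additionally guarantees that for every
edge `j j*` with `j* ∈ C*` we have `Δ j ≥ Δ j* / 2`; i.e. there exist an independent
set and short paths as in the decomposition which also satisfy this neighbor bound. -/
theorem stmt9 {C : Type*} [Fintype C] (G : SimpleGraph C)
    (Δ : C → ℝ) (hΔ : ∀ j, 0 ≤ Δ j) :
    ∃ Cstar : Set C,
      (∀ u ∈ Cstar, ∀ v ∈ Cstar, ¬ G.Adj u v) ∧
      (∀ j : C, ∃ jstar ∈ Cstar, ∃ p : G.Walk j jstar, p.IsPath ∧
        (p.support.map Δ).sum ≤ 2 * Δ j) ∧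
      (∀ j jstar : C, jstar ∈ Cstar → G.Adj j jstar → Δ jstar / 2 ≤ Δ j) := by
  classical
  obtain ⟨S, hST, hS, hdom⟩ := G.exists_isIndepSet_subset_forall_exists_adj_le Δ
    (Finset.univ.filter fun j => ∀ j', G.Adj j j' → Δ j / 2 ≤ Δ j')
  have hSheavy : ∀ s ∈ S, ∀ j', G.Adj s j' → Δ s / 2 ≤ Δ j' :=
    fun s hs => (Finset.mem_filter.mp (hST hs)).2
  exact ⟨S, fun u hu v hv huv => hS hu hv huv.ne huv,
    SimpleGraph.exists_isPath_sum_map_support_le_two_mul hΔ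
      fun t htS hheavy => hdom t (by simpa using hheavy) htS,
    fun j s hs hadj => hSheavy s hs j hadj.symm⟩
end

section
/- Let $S>1$ and $v(s)\in\mathbb{R}_{\ge 0}^N$ be as above (first $S^{s^2}$ coordinates equal $S^{-2s}$, rest $0$, for $s\in\{1,\ldots,L\}$). For every positive integer $\ell\le N$, the top-$\ell$ norm of $v(s)$ equals $\ell S^{-2s}$ if $\ell\le S^{s^2}$ and $S^{s^2-2s}$ otherwise; consequently, for every $\ell$, $\min_{s\in\{1,\ldots,L\}}(\text{top-}\ell\text{ norm of }v(s))$ is attained at $s=1$ or $s=L$. -/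
/-! The vector `v(s)` equals `S^{-2s}` on its first `S^{s²}` coordinates, so its top-`ℓ` norm is
`min(ℓ, S^{s²}) · S^{-2s}`. If `ℓ ≤ S^{s²}` this is `ℓ S^{-2s} ≥ ℓ S^{-2L}`, which dominates the
value at `s = L`; otherwise it is `S^{s²-2s} ≥ S^{-1}`, which dominates the value at `s = 1`.
So every `s` dominates one of the two endpoints, hence the smaller endpoint is dominated by all. -/

/-- The top-`ℓ` norm of a nonnegative vector: the largest sum of `ℓ` coordinates. -/
noncomputable def topNorm {N : ℕ} (l : ℕ) (w : Fin N → ℝ) : ℝ :=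
  ⨆ A ∈ {A : Finset (Fin N) | A.card = l}, ∑ i ∈ A, w i

open Finset

section TopNorm

variable {N l : ℕ} {w : Fin N → ℝ}

-- `0 ≤ c` is needed: in `ℝ`, the `⨆` over an empty index (a card other than `l`) is `0`.
theorem topNorm_le {c : ℝ} (hc : 0 ≤ c) (h : ∀ A : Finset (Fin N), #A = l → ∑ i ∈ A, w i ≤ c) :
    topNorm l w ≤ c :=
  Real.iSup_le (fun A => Real.iSup_le (h A) hc) hc

theorem sum_le_topNorm {A : Finset (Fin N)} (hA : #A = l) : ∑ i ∈ A, w i ≤ topNorm l w :=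
  le_ciSup_of_le (Set.finite_range _).bddAbove A
    (ciSup_pos (f := fun _ : A ∈ {A : Finset (Fin N) | #A = l} => ∑ i ∈ A, w i) hA).ge

end TopNorm

theorem sum_ite_val_lt {N : ℕ} (A : Finset (Fin N)) (K : ℕ) (c : ℝ) :
    ∑ i ∈ A, (if (i : ℕ) < K then c else 0) = #(A.filter fun i : Fin N => (i : ℕ) < K) * c := by
  rw [← sum_filter, sum_const, nsmul_eq_mul]

theorem topNorm_ite_val_lt {N l : ℕ} (K : ℕ) {c : ℝ} (hc : 0 ≤ c) (hl : l ≤ N) :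
    topNorm l (fun i : Fin N => if (i : ℕ) < K then c else 0) = (min l K : ℕ) * c := by
  apply le_antisymm
  · refine topNorm_le (by positivity) fun A hA => ?_
    rw [sum_ite_val_lt]
    gcongr
    refine le_min (hA ▸ card_filter_le A _) ?_
    calc #(A.filter fun i : Fin N => (i : ℕ) < K) ≤ #{i : Fin N | (i : ℕ) < K} :=
          card_le_card (filter_subset_filter _ (subset_univ A))
      _ ≤ K := by rw [Fin.card_filter_val_lt]; exact min_le_right _ _
  · have hcard : #{i : Fin N | (i : ℕ) < l} = l := by
      rw [Fin.card_filter_val_lt, min_eq_right hl]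
    calc ((min l K : ℕ) : ℝ) * c
        = ∑ i ∈ {i : Fin N | (i : ℕ) < l}, (if (i : ℕ) < K then c else 0) := by
          rw [sum_ite_val_lt, filter_filter]
          simp only [← lt_min_iff, Fin.card_filter_val_lt]
          rw [min_eq_right (min_le_left _ _ |>.trans hl)]
      _ ≤ _ := sum_le_topNorm hcard

theorem natCast_pow_sq_mul_zpow {S : ℕ} (hS : S ≠ 0) (s : ℕ) :
    ((S ^ s ^ 2 : ℕ) : ℝ) * (S : ℝ) ^ (-(2 * s : ℤ)) = (S : ℝ) ^ ((s : ℤ) ^ 2 - 2 * s) := by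
  rw [Nat.cast_pow, ← zpow_natCast, ← zpow_add₀ (Nat.cast_ne_zero.mpr hS)]
  push_cast
  ring_nf

theorem forall_le_or_forall_le_of_forall_le_or_le {α β : Type*} [LinearOrder β] {p : α → Prop}
    {f : α → β} {a b : α} (h : ∀ x, p x → f a ≤ f x ∨ f b ≤ f x) :
    (∀ x, p x → f a ≤ f x) ∨ ∀ x, p x → f b ≤ f x := by
  rcases le_total (f a) (f b) with hab | hba
  · exact .inl fun x hx => (h x hx).elim id hab.trans
  · exact .inr fun x hx => (h x hx).elim hba.trans id

noncomputable def blockVector (N S s : ℕ) : Fin N → ℝ :=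
  fun i => if (i : ℕ) < S ^ s ^ 2 then (S : ℝ) ^ (-(2 * s : ℤ)) else 0

section BlockVector

variable {N S l : ℕ}

theorem topNorm_blockVector (hl : l ≤ N) (s : ℕ) :
    topNorm l (blockVector N S s) = (min l (S ^ s ^ 2) : ℕ) * (S : ℝ) ^ (-(2 * s : ℤ)) :=
  topNorm_ite_val_lt _ (by positivity) hl

theorem topNorm_blockVector_eq_ite (hS : S ≠ 0) (hl : l ≤ N) (s : ℕ) :
    topNorm l (blockVector N S s) =
      if l ≤ S ^ s ^ 2 then (l : ℝ) * (S : ℝ) ^ (-(2 * s : ℤ))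
      else (S : ℝ) ^ ((s : ℤ) ^ 2 - 2 * s) := by
  rw [topNorm_blockVector hl]
  split_ifs with h
  · rw [min_eq_left h]
  · rw [min_eq_right (not_le.mp h).le, natCast_pow_sq_mul_zpow hS]

theorem topNorm_blockVector_one_le_or_le (hS : 1 ≤ S) (hl : l ≤ N) {s L : ℕ} (hsL : s ≤ L) :
    topNorm l (blockVector N S 1) ≤ topNorm l (blockVector N S s) ∨
      topNorm l (blockVector N S L) ≤ topNorm l (blockVector N S s) := by
  have hS₁ : (1 : ℝ) ≤ S := by exact_mod_cast hS
  simp only [topNorm_blockVector hl]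
  by_cases hls : l ≤ S ^ s ^ 2
  · right
    rw [min_eq_left hls]
    calc ((min l (S ^ L ^ 2) : ℕ) : ℝ) * (S : ℝ) ^ (-(2 * L : ℤ))
        ≤ l * (S : ℝ) ^ (-(2 * L : ℤ)) := by gcongr; exact min_le_left _ _
      _ ≤ l * (S : ℝ) ^ (-(2 * s : ℤ)) := by gcongr
  · left
    rw [min_eq_right (not_le.mp hls).le, natCast_pow_sq_mul_zpow (by omega)]
    calc ((min l (S ^ 1 ^ 2) : ℕ) : ℝ) * (S : ℝ) ^ (-(2 * (1 : ℕ) : ℤ))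
        ≤ ((S ^ 1 ^ 2 : ℕ) : ℝ) * (S : ℝ) ^ (-(2 * (1 : ℕ) : ℤ)) := by
          gcongr; exact min_le_right _ _
      _ = (S : ℝ) ^ ((1 : ℤ) ^ 2 - 2 * 1) := by rw [natCast_pow_sq_mul_zpow (by omega)]; rfl
      _ ≤ (S : ℝ) ^ ((s : ℤ) ^ 2 - 2 * s) :=
          zpow_le_zpow_right₀ hS₁ (by nlinarith [sq_nonneg ((s : ℤ) - 1)])

end BlockVector

theorem stmt14_general (S N L : ℕ) (hS : 1 < S) :
    let v : ℕ → Fin N → ℝ := fun s i =>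
      if (i : ℕ) < S ^ (s ^ 2) then ((S : ℝ)) ^ (-(2 * s : ℤ)) else 0
    ∀ l : ℕ, 1 ≤ l → l ≤ N →
      (∀ s : ℕ, 1 ≤ s → s ≤ L →
        topNorm l (v s) =
          if l ≤ S ^ (s ^ 2) then (l : ℝ) * (S : ℝ) ^ (-(2 * s : ℤ))
          else (S : ℝ) ^ ((s : ℤ) ^ 2 - 2 * s)) ∧
      ((∀ s : ℕ, 1 ≤ s → s ≤ L → topNorm l (v 1) ≤ topNorm l (v s)) ∨
       (∀ s : ℕ, 1 ≤ s → s ≤ L → topNorm l (v L) ≤ topNorm l (v s))) := by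
  intro v l _ hl
  refine ⟨fun s _ _ => topNorm_blockVector_eq_ite (by omega) hl s, ?_⟩
  have hends := forall_le_or_forall_le_of_forall_le_or_le (p := (· ≤ L))
    (f := fun s => topNorm l (v s)) fun s hsL => topNorm_blockVector_one_le_or_le hS.le hl hsL
  exact hends.imp (fun h s _ => h s) (fun h s _ => h s)

/-- the top-`ℓ` norm of `v(s)` equals `ℓ·S^{-2s}` if `ℓ ≤ S^{s²}` and
`S^{s²-2s}` otherwise; consequently its minimum over `s ∈ {1,…,L}` is attained at
`s = 1` or `s = L`. -/
theorem stmt14 (S N L : ℕ) (hS : 1 < S) (hL : 1 ≤ L) (hN : S ^ (L ^ 2) ≤ N) :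
    let v : ℕ → Fin N → ℝ := fun s i =>
      if (i : ℕ) < S ^ (s ^ 2) then ((S : ℝ)) ^ (-(2 * s : ℤ)) else 0
    ∀ l : ℕ, 1 ≤ l → l ≤ N →
      (∀ s : ℕ, 1 ≤ s → s ≤ L →
        topNorm l (v s) =
          if l ≤ S ^ (s ^ 2) then (l : ℝ) * (S : ℝ) ^ (-(2 * s : ℤ))
          else (S : ℝ) ^ ((s : ℤ) ^ 2 - 2 * s)) ∧
      ((∀ s : ℕ, 1 ≤ s → s ≤ L → topNorm l (v 1) ≤ topNorm l (v s)) ∨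
       (∀ s : ℕ, 1 ≤ s → s ≤ L → topNorm l (v L) ≤ topNorm l (v s))) :=
  stmt14_general S N L hS
end

section
/- Let $C$ be a finite set of clients with revenues $r_j\ge 0$, $F'$ a finite set of open facilities with costs $c_f>0$, and suppose revenues satisfy $r_j\le\theta c_f$ for all $j\in C,f\in F'$ ($\theta$-small revenues). Let $x'$ and $x''$ be nonnegative assignment matrices with $\sum_f x'_{j,f}=\sum_f x''_{j,f}=1$ for each $j$, and suppose for each facility $f$ the load satisfies $\sum_j x''_{j,f}r_j\le\sum_j x'_{j,f}r_j+r_{j(f)}$ for some client $j(f)$ assignable to $f$. If the total loss $\sum_f\max(0,c_f-\sum_j x'_{j,f}r_j)\le\delta'\sum_j r_j$, then $\sum_f\max(0,c_f-\sum_j x''_{j,f}r_j)\le(\delta'+\theta)\sum_j r_j$. -/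
/-!
Write `L f` for the load of facility `f`. Since `max 0 (c - L) = max 0 (L - c) + (c - L)` and
both assignments carry the same total load `∑ j, r j`, the two losses differ exactly by the
difference of the total overflows `∑ f, max 0 (L f - c f)`. Overflow can only grow at a facility
whose new load exceeds its cost, and there by at most one revenue `r j ≤ θ c f ≤ θ L'' f`;
summing `θ L'' f` over the facilities gives `θ ∑ j, r j`.
-/

open Finset

section Overflow

variable {α : Type*} [AddCommGroup α] [LinearOrder α] [IsOrderedAddMonoid α]

lemma max_zero_sub_eq_max_zero_sub_add (a b : α) :
    max 0 (a - b) = max 0 (b - a) + (a - b) := by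
  rcases le_total a b with h | h
  · rw [max_eq_left (sub_nonpos.2 h), max_eq_right (sub_nonneg.2 h)]
    abel
  · rw [max_eq_right (sub_nonneg.2 h), max_eq_left (sub_nonpos.2 h), zero_add]

lemma sum_max_zero_sub_eq_sum_max_zero_sub_add {ι : Type*} (s : Finset ι) (c L : ι → α) :
    ∑ i ∈ s, max 0 (c i - L i) =
      ∑ i ∈ s, max 0 (L i - c i) + (∑ i ∈ s, c i - ∑ i ∈ s, L i) := by
  rw [← sum_sub_distrib, ← sum_add_distrib]
  exact sum_congr rfl fun i _ => max_zero_sub_eq_max_zero_sub_add (c i) (L i)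

end Overflow

lemma max_zero_sub_le_max_zero_sub_add_mul {α : Type*} [Field α] [LinearOrder α]
    [IsStrictOrderedRing α] {c L' L'' ρ θ : α} (hθ : 0 ≤ θ) (hL'' : 0 ≤ L'')
    (hload : L'' ≤ L' + ρ) (hρ : ρ ≤ θ * c) :
    max 0 (L'' - c) ≤ max 0 (L' - c) + θ * L'' := by
  have hθL'' : 0 ≤ θ * L'' := mul_nonneg hθ hL''
  refine max_le (add_nonneg (le_max_left _ _) hθL'') ?_
  rcases le_or_gt L'' c with hc | hc
  · linarith [le_max_left 0 (L' - c)]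
  · have : θ * c ≤ θ * L'' := mul_le_mul_of_nonneg_left hc.le hθ
    linarith [le_max_right 0 (L' - c)]

lemma sum_sum_mul_eq_sum {C F R : Type*} [Fintype F] [NonAssocSemiring R]
    (s : Finset C) (x : C → F → R) (r : C → R) (hx : ∀ j, ∑ f, x j f = 1) :
    ∑ f, ∑ j ∈ s, x j f * r j = ∑ j ∈ s, r j := by
  rw [sum_comm]
  simp only [← sum_mul, hx, one_mul]

theorem stmt16_general {C F : Type*} [Fintype C] [Fintype F]
    (r : C → ℝ) (hr : ∀ j, 0 ≤ r j)
    (c : F → ℝ)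
    (θ : ℝ) (hθ : 0 < θ) (hsmall : ∀ (j : C) (f : F), r j ≤ θ * c f)
    (x' x'' : C → F → ℝ)
    (hx''0 : ∀ j f, 0 ≤ x'' j f)
    (hx'1 : ∀ j, ∑ f, x' j f = 1) (hx''1 : ∀ j, ∑ f, x'' j f = 1)
    (jf : F → C)
    (hload : ∀ f, ∑ j, x'' j f * r j ≤ (∑ j, x' j f * r j) + r (jf f))
    (δ' : ℝ)
    (hloss : ∑ f, max 0 (c f - ∑ j, x' j f * r j) ≤ δ' * ∑ j, r j) :
    ∑ f, max 0 (c f - ∑ j, x'' j f * r j) ≤ (δ' + θ) * ∑ j, r j := by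
  set L' : F → ℝ := fun f => ∑ j, x' j f * r j
  set L'' : F → ℝ := fun f => ∑ j, x'' j f * r j
  have htotal' : ∑ f, L' f = ∑ j, r j := sum_sum_mul_eq_sum _ x' r hx'1
  have htotal'' : ∑ f, L'' f = ∑ j, r j := sum_sum_mul_eq_sum _ x'' r hx''1
  have hoverflow : ∑ f, max 0 (L'' f - c f) ≤ ∑ f, max 0 (L' f - c f) + θ * ∑ j, r j := by
    rw [← htotal'', mul_sum, ← sum_add_distrib]
    exact sum_le_sum fun f _ => max_zero_sub_le_max_zero_sub_add_mul hθ.le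
      (sum_nonneg fun j _ => mul_nonneg (hx''0 j f) (hr j)) (hload f) (hsmall (jf f) f)
  have hloss' := sum_max_zero_sub_eq_sum_max_zero_sub_add univ c L'
  have hloss'' := sum_max_zero_sub_eq_sum_max_zero_sub_add univ c L''
  change ∑ f, max 0 (c f - L' f) ≤ δ' * ∑ j, r j at hloss
  change ∑ f, max 0 (c f - L'' f) ≤ (δ' + θ) * ∑ j, r j
  linarith

/-- subsidy preservation under integral assignment. If revenues are
`θ`-small (`r j ≤ θ·c f`), each facility's load under `x''` exceeds its load under `x'`
by at most the revenue of one assignable client, and `x'` is `δ'`-subsidized, then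
`x''` is `(δ' + θ)`-subsidized. -/
theorem stmt16 {C F : Type*} [Fintype C] [Fintype F]
    (r : C → ℝ) (hr : ∀ j, 0 ≤ r j)
    (c : F → ℝ) (hc : ∀ f, 0 < c f)
    (θ : ℝ) (hθ : 0 < θ) (hsmall : ∀ (j : C) (f : F), r j ≤ θ * c f)
    (x' x'' : C → F → ℝ)
    (hx'0 : ∀ j f, 0 ≤ x' j f) (hx''0 : ∀ j f, 0 ≤ x'' j f)
    (hx'1 : ∀ j, ∑ f, x' j f = 1) (hx''1 : ∀ j, ∑ f, x'' j f = 1)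
    (jf : F → C) (hjf : ∀ f, 0 < x' (jf f) f)
    (hload : ∀ f, ∑ j, x'' j f * r j ≤ (∑ j, x' j f * r j) + r (jf f))
    (δ' : ℝ)
    (hloss : ∑ f, max 0 (c f - ∑ j, x' j f * r j) ≤ δ' * ∑ j, r j) :
    ∑ f, max 0 (c f - ∑ j, x'' j f * r j) ≤ (δ' + θ) * ∑ j, r j :=
  stmt16_general r hr c θ hθ hsmall x' x'' hx''0 hx'1 hx''1 jf hload δ' hloss
end

section
/- Consider a star metric with center $a_0$, leaves $a_1,\ldots,a_L$ at distance 1 from the center, and distance 2 between distinct leaves. There are $T$ 'revenue clients' at distance 1 from each facility location with revenues $a_1,\ldots,a_T$ summing to $2c$ where both facilities $f_1,f_2$ have cost $c=\frac{1}{2}\sum_t a_t$, and subsidy $\delta=0$. Then a solution opening both facilities with zero total loss exists if and only if the multiset $\{a_1,\ldots,a_T\}$ can be partitioned into two subsets each summing to $c$. -/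
/-! Each of the two facilities has zero loss exactly when the clients assigned to it bring in
revenue at least `c`. Since the two groups of clients are complementary and all revenues add up
to `2c`, this happens exactly when the first group brings in revenue exactly `c`, and any set of
clients with revenue `c` is the first group of the assignment sending it to facility `0`. -/

open Finset

theorem Finset.sum_max_zero_sub_eq_zero_iff {ι : Type*} (s : Finset ι) (c : ℝ) (x : ι → ℝ) :
    ∑ i ∈ s, max 0 (c - x i) = 0 ↔ ∀ i ∈ s, c ≤ x i := by
  rw [sum_eq_zero_iff_of_nonneg fun i _ => le_max_left _ _]
  simp only [max_eq_left_iff, sub_nonpos]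

theorem le_sum_and_le_sum_compl_iff {ι : Type*} [Fintype ι] [DecidableEq ι] (a : ι → ℝ)
    (A : Finset ι) {c : ℝ} (hc : 2 * c = ∑ i, a i) :
    (c ≤ ∑ i ∈ A, a i ∧ c ≤ ∑ i ∈ Aᶜ, a i) ↔ ∑ i ∈ A, a i = c := by
  have hsplit := sum_add_sum_compl A a
  constructor
  · rintro ⟨hA, hAc⟩
    linarith
  · intro hA
    constructor <;> linarith

theorem Fin.filter_eq_one_eq_compl {ι : Type*} [Fintype ι] [DecidableEq ι] (g : ι → Fin 2) :
    univ.filter (fun i => g i = 1) = (univ.filter fun i => g i = 0)ᶜ := by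
  ext i
  simp only [mem_filter, mem_univ, true_and, mem_compl]
  rcases Fin.exists_fin_two.mp ⟨g i, rfl⟩ with h | h <;> simp [h]

theorem sum_loss_fin_two_eq_zero_iff {ι : Type*} [Fintype ι] [DecidableEq ι] (a : ι → ℝ)
    (g : ι → Fin 2) {c : ℝ} (hc : 2 * c = ∑ i, a i) :
    ∑ f : Fin 2, max 0 (c - ∑ i ∈ univ.filter (fun i => g i = f), a i) = 0 ↔
      ∑ i ∈ univ.filter (fun i => g i = 0), a i = c := by
  rw [sum_max_zero_sub_eq_zero_iff, ← le_sum_and_le_sum_compl_iff a _ hc,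
    ← Fin.filter_eq_one_eq_compl]
  simp [Fin.forall_fin_two]

theorem stmt17_general (T : ℕ) (a : Fin T → ℝ)
    (c : ℝ) (hc : c = (1 / 2) * ∑ t, a t) :
    (∃ assign : Fin T → Fin 2,
        ∑ f : Fin 2,
          max 0 (c - ∑ t ∈ Finset.univ.filter (fun t => assign t = f), a t) = 0)
    ↔ ∃ A : Finset (Fin T), ∑ t ∈ A, a t = c := by
  have hc2 : 2 * c = ∑ t, a t := by rw [hc]; ring
  constructor
  · rintro ⟨assign, hloss⟩
    exact ⟨_, (sum_loss_fin_two_eq_zero_iff a assign hc2).1 hloss⟩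
  · rintro ⟨A, hA⟩
    refine ⟨fun t => if t ∈ A then 0 else 1, (sum_loss_fin_two_eq_zero_iff a _ hc2).2 ?_⟩
    simpa using hA

/-- hardness reduction core. With two facilities of cost
`c = (1/2)·∑ t, a t` and revenue clients `a_1,…,a_T`, a solution assigning every
revenue client to one of the two open facilities with zero total loss exists iff the
revenues can be partitioned into two parts each summing to `c`. -/
theorem stmt17 (T : ℕ) (a : Fin T → ℝ) (ha : ∀ t, 0 < a t)
    (c : ℝ) (hc : c = (1 / 2) * ∑ t, a t) :
    (∃ assign : Fin T → Fin 2,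
        ∑ f : Fin 2,
          max 0 (c - ∑ t ∈ Finset.univ.filter (fun t => assign t = f), a t) = 0)
    ↔ ∃ A : Finset (Fin T), ∑ t ∈ A, a t = c :=
  stmt17_general T a c hc
end

section
/- Fix $\theta>0$ and $\varepsilon\in(0,1]$, and for $y\in[0,1]$ define $h_y(x)=\exp(\theta|x-y|)$ on $\mathcal{D}=\mathbb{R}$. Let $P=\{k\cdot\log(1+\varepsilon)/\theta : k\in\mathbb{Z}_{\ge 1}\}\cap[0,1]\cup\{1\}$. Then for any $N$, any $y_1,\ldots,y_N\in[0,1]$, and any $\lambda\in\mathbb{R}_{\ge 0}^N$ with $\lambda\neq 0$, there exists $x^*\in P$ with $\sum_i\lambda_i h_{y_i}(x^*)\le(1+\varepsilon)\inf_{x\in\mathbb{R}}\sum_i\lambda_i h_{y_i}(x)$; moreover $|P|\le\theta/\log(1+\varepsilon)+1\le 2\theta/\varepsilon+1$. -/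
/-!
Since every `y i` lies in `[0, 1]`, clamping `x` to `[0, 1]` brings it closer to every `y i`, so
the infimum over `ℝ` of `g(x) = ∑ λᵢ exp(θ |x - yᵢ|)` is attained at some `x₀ ∈ [0, 1]`. By the
triangle inequality, moving `x₀` by at most `δ = log(1 + ε) / θ` multiplies each summand by at
most `exp(θ δ) = 1 + ε`, and every point of `[0, 1]` is within `δ` of the grid `P`.
-/

open Real Set Finset

theorem Real.half_le_log_one_add {ε : ℝ} (hε0 : 0 ≤ ε) (hε1 : ε ≤ 1) : ε / 2 ≤ log (1 + ε) := by
  have hpos : 0 < 1 + ε := by linarith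
  calc ε / 2 ≤ ε / (1 + ε) := div_le_div_of_nonneg_left hε0 hpos (by linarith)
    _ = 1 - (1 + ε)⁻¹ := by field_simp; ring
    _ ≤ log (1 + ε) := one_sub_inv_le_log_of_pos hpos

theorem Set.dist_projIcc_le {a b : ℝ} (h : a ≤ b) {y : ℝ} (hy : y ∈ Icc a b) (x : ℝ) :
    dist (projIcc a b h x : ℝ) y ≤ dist x y := by
  have := (LipschitzWith.projIcc h).dist_le_mul x y
  rwa [projIcc_of_mem h hy, NNReal.coe_one, one_mul, Subtype.dist_eq] at this

section ExpDistSum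

variable {α ι : Type*} [PseudoMetricSpace α] [Fintype ι]

noncomputable def expDistSum (θ : ℝ) (lam : ι → ℝ) (y : ι → α) (x : α) : ℝ :=
  ∑ i, lam i * exp (θ * dist x (y i))

variable {θ : ℝ} {lam : ι → ℝ} {y : ι → α}

theorem continuous_expDistSum : Continuous (expDistSum θ lam y) := by
  unfold expDistSum
  fun_prop

theorem expDistSum_nonneg (hlam : ∀ i, 0 ≤ lam i) (x : α) : 0 ≤ expDistSum θ lam y x :=
  Finset.sum_nonneg fun i _ => mul_nonneg (hlam i) (exp_nonneg _)

theorem expDistSum_mono (hθ : 0 ≤ θ) (hlam : ∀ i, 0 ≤ lam i) {x x' : α}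
    (h : ∀ i, dist x (y i) ≤ dist x' (y i)) : expDistSum θ lam y x ≤ expDistSum θ lam y x' := by
  unfold expDistSum
  gcongr with i
  · exact hlam i
  · exact h i

theorem expDistSum_le_exp_mul (hθ : 0 ≤ θ) (hlam : ∀ i, 0 ≤ lam i) (x x' : α) :
    expDistSum θ lam y x ≤ exp (θ * dist x x') * expDistSum θ lam y x' := by
  unfold expDistSum
  rw [Finset.mul_sum]
  refine Finset.sum_le_sum fun i _ => ?_
  calc lam i * exp (θ * dist x (y i)) ≤ lam i * exp (θ * (dist x x' + dist x' (y i))) := by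
        gcongr
        · exact hlam i
        · exact dist_triangle _ _ _
    _ = exp (θ * dist x x') * (lam i * exp (θ * dist x' (y i))) := by
        rw [mul_add, exp_add]; ring

end ExpDistSum

theorem exists_mem_Icc_expDistSum_le {ι : Type*} [Fintype ι] {θ a b : ℝ} (hθ : 0 ≤ θ) (hab : a ≤ b)
    {lam : ι → ℝ} (hlam : ∀ i, 0 ≤ lam i) {y : ι → ℝ} (hy : ∀ i, y i ∈ Icc a b) :
    ∃ x₀ ∈ Icc a b, ∀ x, expDistSum θ lam y x₀ ≤ expDistSum θ lam y x := by
  obtain ⟨x₀, hx₀, hmin⟩ := isCompact_Icc.exists_isMinOn (nonempty_Icc.2 hab)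
    (continuous_expDistSum (θ := θ) (lam := lam) (y := y)).continuousOn
  refine ⟨x₀, hx₀, fun x => (hmin (projIcc a b hab x).2).trans ?_⟩
  exact expDistSum_mono hθ hlam fun i => dist_projIcc_le hab (hy i) x

def grid (δ : ℝ) : Set ℝ :=
  ({x | ∃ k : ℕ, 1 ≤ k ∧ x = k * δ} ∩ Icc 0 1) ∪ {1}

theorem exists_mem_grid_dist_le {δ x : ℝ} (hδ : 0 < δ) (hx : x ∈ Icc (0 : ℝ) 1) :
    ∃ p ∈ grid δ, dist p x ≤ δ := by
  set k := ⌊x / δ⌋₊ + 1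
  have hk_le : (k : ℝ) * δ ≤ x + δ := by
    have := Nat.floor_le (div_nonneg hx.1 hδ.le)
    push_cast [k]
    rw [le_div_iff₀ hδ] at this
    linarith
  have hk_gt : x < k * δ := by
    have := Nat.lt_floor_add_one (x / δ)
    push_cast [k]
    rwa [div_lt_iff₀ hδ] at this
  simp only [Real.dist_eq]
  by_cases hk1 : (k : ℝ) * δ ≤ 1
  · refine ⟨k * δ, Or.inl ⟨⟨k, Nat.le_add_left 1 _, rfl⟩, by positivity, hk1⟩, ?_⟩
    rw [abs_of_nonneg (by linarith)]
    linarith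
  · refine ⟨1, Or.inr rfl, ?_⟩
    rw [abs_of_nonneg (by linarith [hx.2])]
    linarith

theorem grid_subset {δ : ℝ} (hδ : 0 < δ) :
    grid δ ⊆ ↑(insert 1 ((Finset.Icc 1 ⌊δ⁻¹⌋₊).image fun k : ℕ => (k : ℝ) * δ)) := by
  rintro x (⟨⟨k, hk1, rfl⟩, -, hk⟩ | rfl)
  · refine Finset.mem_insert_of_mem (Finset.mem_image_of_mem _ (Finset.mem_Icc.2 ⟨hk1, ?_⟩))
    exact Nat.le_floor (by rwa [← one_div, le_div_iff₀ hδ])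
  · exact Finset.mem_insert_self _ _

theorem grid_finite {δ : ℝ} (hδ : 0 < δ) : (grid δ).Finite :=
  (Finset.finite_toSet _).subset (grid_subset hδ)

theorem card_toFinset_grid_le {δ : ℝ} (hδ : 0 < δ) (hfin : (grid δ).Finite) :
    (hfin.toFinset.card : ℝ) ≤ δ⁻¹ + 1 := by
  have hcard : hfin.toFinset.card ≤ ⌊δ⁻¹⌋₊ + 1 :=
    calc hfin.toFinset.card
        ≤ (insert 1 ((Finset.Icc 1 ⌊δ⁻¹⌋₊).image fun k : ℕ => (k : ℝ) * δ)).card :=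
          Finset.card_le_card (Set.Finite.toFinset_subset.2 (grid_subset hδ))
      _ ≤ ((Finset.Icc 1 ⌊δ⁻¹⌋₊).image fun k : ℕ => (k : ℝ) * δ).card + 1 :=
          Finset.card_insert_le _ _
      _ ≤ ⌊δ⁻¹⌋₊ + 1 := by
          gcongr
          exact Finset.card_image_le.trans (by simp)
  have hfloor := Nat.floor_le (inv_nonneg.2 hδ.le)
  exact_mod_cast (Nat.cast_le.2 hcard).trans (by push_cast; linarith)

/-- for exponential base functions `h_y(x) = exp(θ|x - y|)` with
`y ∈ [0,1]`, the grid `P = {k·log(1+ε)/θ : k ≥ 1} ∩ [0,1] ∪ {1}` is a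
`(1+ε)`-approximate portfolio for all conic combinations, of size at most
`θ/log(1+ε) + 1 ≤ 2θ/ε + 1`. -/
theorem stmt19 (θ ε : ℝ) (hθ : 0 < θ) (hε0 : 0 < ε) (hε1 : ε ≤ 1) :
    let P : Set ℝ :=
      ({x | ∃ k : ℕ, 1 ≤ k ∧ x = k * Real.log (1 + ε) / θ} ∩ Set.Icc 0 1) ∪ {1}
    (∀ (N : ℕ) (y : Fin N → ℝ), (∀ i, y i ∈ Set.Icc (0 : ℝ) 1) →
      ∀ lam : Fin N → ℝ, (∀ i, 0 ≤ lam i) → lam ≠ 0 →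
      ∃ xstar ∈ P,
        ∑ i, lam i * Real.exp (θ * |xstar - y i|) ≤
          (1 + ε) * ⨅ x : ℝ, ∑ i, lam i * Real.exp (θ * |x - y i|)) ∧
    ∃ hfin : P.Finite,
      (hfin.toFinset.card : ℝ) ≤ θ / Real.log (1 + ε) + 1 ∧
      θ / Real.log (1 + ε) + 1 ≤ 2 * θ / ε + 1 := by
  intro P
  have hL : 0 < log (1 + ε) := log_pos (by linarith)
  have hδ : 0 < log (1 + ε) / θ := div_pos hL hθ
  have hP : P = grid (log (1 + ε) / θ) := by simp only [P, grid, mul_div_assoc]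
  rw [hP]
  refine ⟨fun N y hy lam hlam _ => ?_, grid_finite hδ, ?_, ?_⟩
  · simp only [← Real.dist_eq]
    change ∃ p ∈ _, expDistSum θ lam y p ≤ (1 + ε) * ⨅ x, expDistSum θ lam y x
    obtain ⟨x₀, hx₀, hmin⟩ := exists_mem_Icc_expDistSum_le hθ.le zero_le_one hlam hy
    obtain ⟨p, hp, hpx₀⟩ := exists_mem_grid_dist_le hδ hx₀
    refine ⟨p, hp, ?_⟩
    calc expDistSum θ lam y p ≤ exp (θ * dist p x₀) * expDistSum θ lam y x₀ :=
          expDistSum_le_exp_mul hθ.le hlam p x₀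
      _ ≤ exp (θ * (log (1 + ε) / θ)) * expDistSum θ lam y x₀ := by
          gcongr
          exact expDistSum_nonneg hlam x₀
      _ ≤ (1 + ε) * ⨅ x, expDistSum θ lam y x := by
          rw [mul_div_cancel₀ _ hθ.ne', exp_log (by linarith)]
          gcongr
          exact le_ciInf hmin
  · simpa only [inv_div] using card_toFinset_grid_le hδ _
  · gcongr ?_ + 1
    rw [div_le_div_iff₀ hL hε0]
    nlinarith [half_le_log_one_add hε0.le hε1]
end
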